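/- Define f(n) := (n/2)·((2n−1)/(2n−3))·3^{n−1}/C(2n,n) for integers n ≥ 2. Then f is strictly decreasing: f(n) > f(n+1) for every integer n ≥ 2. -/

import Mathlib

/-!
From `(n + 1) C(2n+2, n+1) = 2 (2n + 1) C(2n, n)` one gets
`f (n + 1) / f n = 3 (n + 1)² (2n − 3) / (2n (2n − 1)²)`, and this ratio is below `1` for
`n ≥ 2` because `2n (2n − 1)² − 3 (n + 1)² (2n − 3) = 2n³ − 11n² + 14n + 9 > 0` there.
-/

/-- `f(n) = (n/2)·((2n−1)/(2n−3))·3^{n−1}/C(2n,n)` for integers `n ≥ 2`. -/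
noncomputable def f (n : ℕ) : ℝ :=
  ((n : ℝ) / 2) * ((2 * (n : ℝ) - 1) / (2 * (n : ℝ) - 3)) * 3 ^ (n - 1) /
    (Nat.choose (2 * n) n : ℝ)

lemma f_pos {n : ℕ} (hn : 2 ≤ n) : 0 < f n := by
  have hn' : (2 : ℝ) ≤ n := by exact_mod_cast hn
  have h3 : 0 < 2 * (n : ℝ) - 3 := by linarith
  have h1 : 0 < 2 * (n : ℝ) - 1 := by linarith
  have hC : (0 : ℝ) < Nat.choose (2 * n) n := by exact_mod_cast Nat.choose_pos (by omega)
  unfold f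
  positivity

lemma f_succ {n : ℕ} (hn : 0 < n) :
    f (n + 1) = f n * (3 * (n + 1) ^ 2 * (2 * n - 3) / (2 * n * (2 * n - 1) ^ 2)) := by
  have hn' : (1 : ℝ) ≤ n := by exact_mod_cast hn
  have hrec : (Nat.centralBinom (n + 1) : ℝ) =
      2 * (2 * n + 1) * Nat.centralBinom n / (n + 1) := by
    rw [eq_div_iff (by positivity)]
    exact_mod_cast (mul_comm _ _).trans (Nat.succ_mul_centralBinom_succ n)
  have hC : (0 : ℝ) < Nat.centralBinom n := by exact_mod_cast Nat.centralBinom_pos n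
  have h3 : 2 * (n : ℝ) - 3 ≠ 0 := by
    intro h
    have : 2 * n = 3 := by exact_mod_cast (by linarith : (2 * n : ℝ) = 3)
    omega
  have h1 : 2 * (n : ℝ) - 1 ≠ 0 := by linarith
  have hpow : (3 : ℝ) ^ n = 3 ^ (n - 1) * 3 := by rw [← pow_succ, Nat.sub_add_cancel hn]
  simp only [f, ← Nat.centralBinom_eq_two_mul_choose, Nat.add_sub_cancel]
  push_cast
  rw [hpow, hrec, show 2 * ((n : ℝ) + 1) - 3 = 2 * n - 1 by ring]
  field_simp
  rw [div_eq_div_iff (by linarith) (mul_ne_zero (by linarith) (by contrapose! h3; linarith))]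
  ring

lemma f_succ_ratio_lt_one {a : ℝ} (ha : 2 ≤ a) :
    3 * (a + 1) ^ 2 * (2 * a - 3) / (2 * a * (2 * a - 1) ^ 2) < 1 := by
  rw [div_lt_one (by nlinarith)]
  nlinarith [sq_nonneg (a - 3), mul_nonneg (sub_nonneg.2 ha) (sq_nonneg (a - 3))]

theorem f_strictly_decreasing (n : ℕ) (hn : 2 ≤ n) : f n > f (n + 1) := by
  rw [gt_iff_lt, f_succ (by omega)]
  exact mul_lt_of_lt_one_right (f_pos hn) (f_succ_ratio_lt_one (by exact_mod_cast hn))
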